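/- Let D be a positive integer, let C = (ζ, r̂, r) ∈ S_D, and let α ∈ K be such that ι(α) does not lie on C. Set d = √|Δ| · N((α, 1)) / √D, where N((α, 1)) is the absolute norm of the fractional ideal (α, 1). Then every point z ∈ ℂ lying on C satisfies |z − ι(α)| ≥ (√2 − 1)·min(d, √(d/|r|)) if r ≠ 0, and |z − ι(α)| ≥ (√2 − 1)·d if r = 0. -/

import Mathlib

open Complex NumberField ComplexConjugate
open scoped nonZeroDivisors

noncomputable section

/-- `i·√t` for a real number `t` (so `isqrt |Δ| = √Δ` and `isqrt D = i√D`). -/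
def isqrt (t : ℝ) : ℂ := Complex.I * Real.sqrt t

/-- `(ζ, r̂, r)` is an oriented circle: `|ζ|² - r̂·r = 1`. -/
def IsOrientedCircle (ζ : ℂ) (rhat r : ℝ) : Prop :=
  Complex.normSq ζ - rhat * r = 1

/-- The point `z ∈ ℂ` lies on the oriented circle `(ζ, r̂, r)`:
`r·|z|² - 2·Re(conj z · ζ) + r̂ = 0`. -/
def LiesOn (z : ℂ) (ζ : ℂ) (rhat r : ℝ) : Prop :=
  r * Complex.normSq z - 2 * (conj z * ζ).re + rhat = 0

/-- Membership of the oriented circle `(ζ, r̂, r)` in the arrangement `S_D`: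
`i√D·ζ ∈ ι(𝒪)` and `i√D·r̂, i√D·r ∈ √Δ·ℤ`, where `√Δ = i√|Δ|`. -/
def MemSD (K : Type*) [Field K] [NumberField K] (ι : K →+* ℂ) (D : ℝ)
    (ζ : ℂ) (rhat r : ℝ) : Prop :=
  IsOrientedCircle ζ rhat r ∧
  (∃ a : 𝓞 K, ι (a : K) = isqrt D * ζ) ∧
  (∃ m : ℤ, isqrt D * (rhat : ℂ) = isqrt |(NumberField.discr K : ℝ)| * (m : ℂ)) ∧
  (∃ m : ℤ, isqrt D * (r : ℂ) = isqrt |(NumberField.discr K : ℝ)| * (m : ℂ))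

/-- The Minkowski pairing `⟨v_C, v_C'⟩_Q` of two oriented circles, a real number. -/
def pairingQ (ζ : ℂ) (rhat r : ℝ) (ζ' : ℂ) (rhat' r' : ℝ) : ℝ :=
  ((ζ * conj ζ' + conj ζ * ζ').re - rhat * r' - r * rhat') / 2

/-- The spin matrix `N(M)` of `M = [[α, γ], [β, δ]]`. -/
def spin (α β γ δ : ℂ) : Matrix (Fin 4) (Fin 4) ℂ :=
  !![α * conj δ, β * conj γ, α * conj γ, β * conj δ;
     conj β * γ, conj α * δ, conj α * γ, conj β * δ;
     α * conj β, conj α * β, (Complex.normSq α : ℂ), (Complex.normSq β : ℂ);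
     γ * conj δ, conj γ * δ, (Complex.normSq γ : ℂ), (Complex.normSq δ : ℂ)]

/-- The row vector `v_C = [ζ, conj ζ, r̂, r]` associated to an oriented circle. -/
def vC (ζ : ℂ) (rhat r : ℝ) : Fin 4 → ℂ := ![ζ, conj ζ, (rhat : ℂ), (r : ℂ)]

/-- The fractional ideal of `K` generated by two elements. -/
def gen2 (K : Type*) [Field K] [NumberField K] (x y : K) :
    FractionalIdeal (𝓞 K)⁰ K :=
  FractionalIdeal.spanSingleton (𝓞 K)⁰ x + FractionalIdeal.spanSingleton (𝓞 K)⁰ y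

/-- The fractional ideal of `K` generated by four elements (e.g. the entries of a
`2×2` matrix). -/
def gen4 (K : Type*) [Field K] [NumberField K] (a b c d : K) :
    FractionalIdeal (𝓞 K)⁰ K :=
  FractionalIdeal.spanSingleton (𝓞 K)⁰ a + FractionalIdeal.spanSingleton (𝓞 K)⁰ b +
    FractionalIdeal.spanSingleton (𝓞 K)⁰ c + FractionalIdeal.spanSingleton (𝓞 K)⁰ d

/-- The class of a fractional ideal in the class group of `K`
(junk value `1` for the zero ideal). -/
def classOf (K : Type*) [Field K] [NumberField K]
    (I : FractionalIdeal (𝓞 K)⁰ K) : ClassGroup (𝓞 K) :=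
  letI := Classical.dec (I = 0)
  if h : I = 0 then 1 else ClassGroup.mk K (Units.mk0 I h)

/-!
Write `f(w) = r|w|² - 2 Re(w̄ ζ) + r̂`, so that `C = {f = 0}`.

Arithmetically, with `q = N((α, 1))⁻¹ ∈ ℕ` one has `qα ∈ 𝒪` and `q N(α) ∈ ℤ`, and for
`β, γ ∈ 𝒪` the number `ι β · conj (ι γ) - conj (ι β) · ι γ` lies in `√Δ ℤ`, because for a basis
of `𝒪` it squares to `Δ`. Hence `q · i√D · f(ι α) ∈ √Δ ℤ`, and `f(ι α) ≠ 0` forces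
`|f(ι α)| ≥ d`.

Geometrically, for `z` on `C` one has `|r z - ζ| = 1` and
`f(w) = r |w - z|² + 2 Re((w - z) conj (r z - ζ))`, so `d ≤ |r| δ² + 2δ` with `δ = |z - ι α|`.
Since `c = √2 - 1` solves `c² + 2c = 1`, the bound `δ < c · min(d, √(d/|r|))` would give
`|r| δ² + 2δ < d`.
-/

lemma isqrt_sq {t : ℝ} (ht : 0 ≤ t) : isqrt t ^ 2 = -t := by
  simp [isqrt, mul_pow, Complex.I_sq, ← Complex.ofReal_pow, Real.sq_sqrt ht]

lemma conj_isqrt (t : ℝ) : conj (isqrt t) = -isqrt t := by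
  simp [isqrt]

lemma NumberField.ComplexEmbedding.not_isReal_of_im_ne_zero {K : Type*} [Field K]
    {ι : K →+* ℂ} {x : K} (hx : (ι x).im ≠ 0) : ¬IsReal ι :=
  fun h => hx (Complex.conj_eq_iff_im.mp (RingHom.congr_fun (isReal_iff.mp h) x))

section ImaginaryQuadratic

open NumberField.ComplexEmbedding

variable {K : Type*} [Field K] [NumberField K] {ι : K →+* ℂ}

lemma equivRatAlgHom_ne_conjugate (hι : ¬IsReal ι) :
    RingHom.equivRatAlgHom K ℂ ι ≠ RingHom.equivRatAlgHom K ℂ (conjugate ι) :=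
  fun h => hι (isReal_iff.mpr ((RingHom.equivRatAlgHom K ℂ).injective h).symm)

open scoped Classical in
lemma univ_algHom_eq_pair (hdeg : Module.finrank ℚ K = 2) (hι : ¬IsReal ι) :
    (Finset.univ : Finset (K →ₐ[ℚ] ℂ)) =
      {RingHom.equivRatAlgHom K ℂ ι, RingHom.equivRatAlgHom K ℂ (conjugate ι)} := by
  refine (Finset.eq_of_subset_of_card_le (Finset.subset_univ _) ?_).symm
  rw [Finset.card_univ, ← Fintype.card_congr (RingHom.equivRatAlgHom K ℂ),
    NumberField.Embeddings.card K ℂ, hdeg, Finset.card_pair (equivRatAlgHom_ne_conjugate hι)]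

lemma trace_eq_add_conj (hdeg : Module.finrank ℚ K = 2) (hι : ¬IsReal ι) (x : K) :
    ((Algebra.trace ℚ K x : ℚ) : ℂ) = ι x + conj (ι x) := by
  classical
  rw [← eq_ratCast (algebraMap ℚ ℂ), trace_eq_sum_embeddings (E := ℂ),
    univ_algHom_eq_pair hdeg hι, Finset.sum_pair (equivRatAlgHom_ne_conjugate hι)]
  rfl

lemma norm_eq_normSq (hdeg : Module.finrank ℚ K = 2) (hι : ¬IsReal ι) (x : K) :
    ((Algebra.norm ℚ x : ℚ) : ℝ) = Complex.normSq (ι x) := by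
  classical
  have h := Algebra.norm_eq_prod_embeddings ℚ ℂ x
  rw [univ_algHom_eq_pair hdeg hι, Finset.prod_pair (equivRatAlgHom_ne_conjugate hι),
    eq_ratCast (algebraMap ℚ ℂ)] at h
  exact_mod_cast h.trans (Complex.mul_conj (ι x))

lemma discr_eq_sq (hdeg : Module.finrank ℚ K = 2) (hι : ¬IsReal ι)
    (b : Module.Basis (Fin 2) ℤ (𝓞 K)) :
    ((discr K : ℝ) : ℂ) = (ι (b 0) * conj (ι (b 1)) - conj (ι (b 0)) * ι (b 1)) ^ 2 := by
  have h : (discr K : ℚ) = Algebra.discr ℚ (fun i => (b i : K)) := by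
    rw [← discr_eq_discr K b, ← eq_intCast (algebraMap ℤ ℚ),
      ← Algebra.discr_localizationLocalization ℤ ℤ⁰ K b]
    congr
    ext
    simp
  rw [Algebra.discr_def, Matrix.det_fin_two] at h
  simp only [Algebra.traceMatrix_apply, Algebra.traceForm_apply] at h
  rw [show ((discr K : ℝ) : ℂ) = ((discr K : ℚ) : ℂ) by norm_cast, h]
  push_cast
  simp only [trace_eq_add_conj hdeg hι, map_mul]
  ring

lemma exists_sub_conj_eq_isqrt_discr_mul (hdeg : Module.finrank ℚ K = 2) (hι : ¬IsReal ι)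
    (β γ : 𝓞 K) :
    ∃ y : ℤ, ι β * conj (ι γ) - conj (ι β) * ι γ = isqrt |(discr K : ℝ)| * y := by
  have hcard : Fintype.card (Module.Free.ChooseBasisIndex ℤ (𝓞 K)) = 2 := by
    rw [← Module.finrank_eq_card_chooseBasisIndex, RingOfIntegers.rank, hdeg]
  let b := (RingOfIntegers.basis K).reindex (Fintype.equivFinOfCardEq hcard)
  set G := ι (b 0) * conj (ι (b 1)) - conj (ι (b 0)) * ι (b 1) with hG
  -- `G` is purely imaginary with `G² = Δ`, hence `G = ±√Δ`.
  have hΔ : (discr K : ℝ) = -Complex.normSq G := by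
    have hconj : conj G = -G := by simp [hG]
    apply Complex.ofReal_injective
    rw [discr_eq_sq hdeg hι b, Complex.ofReal_neg, ← Complex.mul_conj, hconj]
    ring
  have hGsq : G ^ 2 = isqrt |(discr K : ℝ)| ^ 2 := by
    rw [isqrt_sq (abs_nonneg _), abs_of_nonpos (by rw [hΔ]; simpa using Complex.normSq_nonneg G),
      Complex.ofReal_neg, neg_neg, ← discr_eq_sq hdeg hι b]
  obtain ⟨ε, hε⟩ : ∃ ε : ℤ, G = isqrt |(discr K : ℝ)| * ε := by
    rcases sq_eq_sq_iff_eq_or_eq_neg.1 hGsq with h | h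
    exacts [⟨1, by simp [h]⟩, ⟨-1, by simp [h]⟩]
  have hexp (x : 𝓞 K) : ι x = b.repr x 0 * ι (b 0) + b.repr x 1 * ι (b 1) := by
    conv_lhs => rw [← b.sum_repr x]
    simp [Fin.sum_univ_two]
  refine ⟨(b.repr β 0 * b.repr γ 1 - b.repr β 1 * b.repr γ 0) * ε, ?_⟩
  rw [hexp β, hexp γ]
  simp only [map_add, map_mul, map_intCast]
  push_cast
  linear_combination ((b.repr β 0 : ℂ) * b.repr γ 1 - b.repr β 1 * b.repr γ 0) * hε

end ImaginaryQuadratic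

namespace FractionalIdeal

variable {K : Type*} [Field K] [NumberField K] {I : FractionalIdeal (𝓞 K)⁰ K}
  {J : Ideal (𝓞 K)}

lemma exists_coeIdeal_mul_eq_one_of_one_mem (h : (1 : K) ∈ I) :
    ∃ J : Ideal (𝓞 K), (J : FractionalIdeal (𝓞 K)⁰ K) * I = 1 := by
  have hI : I ≠ 0 := by
    rintro rfl
    simp at h
  have hle : I⁻¹ ≤ 1 := fun x hx => by
    simpa using (mem_inv_iff hI).mp hx 1 h
  obtain ⟨J, hJ⟩ := le_one_iff_exists_coeIdeal.mp hle
  exact ⟨J, hJ ▸ inv_mul_cancel₀ hI⟩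

lemma absNorm_eq_inv_of_coeIdeal_mul_eq_one (hJ : (J : FractionalIdeal (𝓞 K)⁰ K) * I = 1) :
    absNorm I = (Ideal.absNorm J : ℚ)⁻¹ := by
  have h := congrArg absNorm hJ
  rw [map_mul, map_one, coeIdeal_absNorm] at h
  exact eq_inv_of_mul_eq_one_right h

lemma exists_algebraMap_eq_absNorm_mul_of_mem (hJ : (J : FractionalIdeal (𝓞 K)⁰ K) * I = 1)
    {x : K} (hx : x ∈ I) : ∃ g : 𝓞 K, algebraMap (𝓞 K) K g = Ideal.absNorm J * x := by
  have hmem : (Ideal.absNorm J : K) * x ∈ (J : FractionalIdeal (𝓞 K)⁰ K) * I :=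
    mul_mem_mul ((mem_coeIdeal _).mpr ⟨_, Ideal.absNorm_mem J, by simp⟩) hx
  rw [hJ] at hmem
  exact (mem_one_iff _).mp hmem

lemma exists_abs_norm_mul_absNorm_eq_of_mem (hJ : (J : FractionalIdeal (𝓞 K)⁰ K) * I = 1)
    {x : K} (hx : x ∈ I) : ∃ n : ℕ, |Algebra.norm ℚ x| * Ideal.absNorm J = n := by
  have hle : spanSingleton (𝓞 K)⁰ x * J ≤ 1 := by
    rw [← hJ, mul_comm]
    exact mul_le_mul_right (spanSingleton_le_iff_mem.mpr hx) _
  obtain ⟨J', hJ'⟩ := le_one_iff_exists_coeIdeal.mp hle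
  refine ⟨Ideal.absNorm J', ?_⟩
  have h := congrArg absNorm hJ'
  rwa [map_mul, absNorm_span_singleton, coeIdeal_absNorm, coeIdeal_absNorm, eq_comm] at h

end FractionalIdeal

lemma left_mem_gen2 {K : Type*} [Field K] [NumberField K] (x y : K) : x ∈ gen2 K x y := by
  rw [gen2, ← FractionalIdeal.sup_eq_add]
  exact le_sup_left (a := FractionalIdeal.spanSingleton _ x)
    (FractionalIdeal.mem_spanSingleton_self _ x)

lemma right_mem_gen2 {K : Type*} [Field K] [NumberField K] (x y : K) : y ∈ gen2 K x y := by
  rw [gen2, ← FractionalIdeal.sup_eq_add]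
  exact le_sup_right (b := FractionalIdeal.spanSingleton _ y)
    (FractionalIdeal.mem_spanSingleton_self _ y)

def circlePower (ζ : ℂ) (rhat r : ℝ) (w : ℂ) : ℝ :=
  r * Complex.normSq w - 2 * (conj w * ζ).re + rhat

lemma liesOn_iff_circlePower_eq_zero {z ζ : ℂ} {rhat r : ℝ} :
    LiesOn z ζ rhat r ↔ circlePower ζ rhat r z = 0 := Iff.rfl

lemma exists_int_mul_circlePower_eq {K : Type*} [Field K] [NumberField K] {ι : K →+* ℂ}
    (hdeg : Module.finrank ℚ K = 2) (hι : ¬ComplexEmbedding.IsReal ι) {D : ℝ} {ζ : ℂ}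
    {rhat r : ℝ} (hC : MemSD K ι D ζ rhat r) {α : K} {q n : ℕ} {g : 𝓞 K}
    (hg : algebraMap (𝓞 K) K g = q * α) (hn : |Algebra.norm ℚ α| * q = n) :
    ∃ k : ℤ, q * √D * circlePower ζ rhat r (ι α) = √|(discr K : ℝ)| * k := by
  obtain ⟨-, ⟨a, ha⟩, ⟨m', hm'⟩, ⟨m, hm⟩⟩ := hC
  obtain ⟨y, hy⟩ := exists_sub_conj_eq_isqrt_discr_mul hdeg hι g a
  have hN := norm_eq_normSq hdeg hι α
  have hqn : (q : ℂ) * (ι α * conj (ι α)) = n := by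
    have hN0 : 0 ≤ Algebra.norm ℚ α := by exact_mod_cast hN ▸ Complex.normSq_nonneg (ι α)
    rw [abs_of_nonneg hN0, mul_comm] at hn
    rw [Complex.mul_conj, ← hN]
    exact_mod_cast hn
  have hιg : ι g = q * ι α := by simpa using congrArg ι hg
  rw [hιg, ha] at hy
  simp only [map_mul, map_natCast, conj_isqrt] at hy
  refine ⟨m * n + m' * q + y, ?_⟩
  apply Complex.ofReal_injective
  apply mul_left_cancel₀ Complex.I_ne_zero
  simp only [circlePower, isqrt] at hm hm' hy ⊢
  push_cast
  rw [← Complex.mul_conj, Complex.re_eq_add_conj]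
  simp only [map_mul, Complex.conj_conj]
  linear_combination (q : ℂ) * (ι α * conj (ι α)) * hm + Complex.I * √|(discr K : ℝ)| * m * hqn
    + q * hm' + hy

lemma div_le_abs_of_mul_eq_mul_intCast {a b f : ℝ} {k : ℤ} (ha : 0 ≤ a) (hb : 0 ≤ b)
    (hf : f ≠ 0) (h : b * f = a * k) : a / b ≤ |f| := by
  rcases hb.eq_or_lt with rfl | hb
  · simp
  rcases eq_or_ne k 0 with rfl | hk
  · simp [hb.ne', hf] at h
  have hk1 : (1 : ℝ) ≤ |(k : ℝ)| := by exact_mod_cast Int.one_le_abs hk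
  rw [div_le_iff₀ hb]
  calc a ≤ a * |(k : ℝ)| := le_mul_of_one_le_right ha hk1
    _ = |f| * b := by rw [← abs_of_nonneg ha, ← abs_mul, ← h, abs_mul, abs_of_pos hb, mul_comm]

section Circle

variable {ζ z : ℂ} {rhat r : ℝ}

lemma LiesOn.norm_mul_sub_eq_one (hC : IsOrientedCircle ζ rhat r) (hz : LiesOn z ζ rhat r) :
    ‖(r : ℂ) * z - ζ‖ = 1 := by
  have h : ‖(r : ℂ) * z - ζ‖ ^ 2 = 1 := by
    rw [← Complex.normSq_eq_norm_sq]
    unfold IsOrientedCircle at hC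
    unfold LiesOn at hz
    simp only [Complex.normSq_apply, Complex.mul_re, Complex.mul_im, Complex.conj_re,
      Complex.conj_im, Complex.sub_re, Complex.sub_im, Complex.ofReal_re,
      Complex.ofReal_im] at *
    linear_combination r * hz + hC
  exact (pow_eq_one_iff_of_nonneg (norm_nonneg _) two_ne_zero).mp h

lemma LiesOn.circlePower_eq (hz : LiesOn z ζ rhat r) (w : ℂ) :
    circlePower ζ rhat r w = r * ‖w - z‖ ^ 2 + 2 * ((w - z) * conj ((r : ℂ) * z - ζ)).re := by
  unfold LiesOn at hz
  simp only [circlePower, ← Complex.normSq_eq_norm_sq, Complex.normSq_apply, Complex.mul_re,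
    Complex.mul_im, Complex.conj_re, Complex.conj_im, Complex.sub_re, Complex.sub_im,
    Complex.ofReal_re, Complex.ofReal_im] at *
  linear_combination hz

lemma LiesOn.abs_circlePower_le (hC : IsOrientedCircle ζ rhat r) (hz : LiesOn z ζ rhat r)
    (w : ℂ) : |circlePower ζ rhat r w| ≤ |r| * ‖w - z‖ ^ 2 + 2 * ‖w - z‖ := by
  have hre := Complex.abs_re_le_norm ((w - z) * conj ((r : ℂ) * z - ζ))
  rw [norm_mul, Complex.norm_conj, hz.norm_mul_sub_eq_one hC, mul_one] at hre
  rw [hz.circlePower_eq]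
  calc _ ≤ |r * ‖w - z‖ ^ 2| + |2 * ((w - z) * conj ((r : ℂ) * z - ζ)).re| := abs_add_le _ _
    _ ≤ _ := by
      rw [abs_mul, abs_mul, abs_two, abs_of_nonneg (sq_nonneg ‖w - z‖)]
      gcongr

end Circle

lemma sqrt_two_sub_one_mul_min_le {d ρ δ : ℝ} (hρ : 0 < ρ) (hδ : 0 ≤ δ)
    (h : d ≤ ρ * δ ^ 2 + 2 * δ) : (√2 - 1) * min d √(d / ρ) ≤ δ := by
  set c := √2 - 1 with hc_def
  have hc : 0 < c := by simp [c, Real.lt_sqrt]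
  have hc2 : c ^ 2 + 2 * c = 1 := by
    rw [hc_def]
    linear_combination Real.sq_sqrt zero_le_two
  by_contra! hlt
  have hmin : 0 < min d √(d / ρ) := pos_of_mul_pos_right (hδ.trans_lt hlt) hc.le
  have h1 : δ < c * d := hlt.trans_le (by gcongr; exact min_le_left _ _)
  have h2 : δ < c * √(d / ρ) := hlt.trans_le (by gcongr; exact min_le_right _ _)
  have hd : 0 < d := hmin.trans_le (min_le_left _ _)
  have h3 : ρ * δ ^ 2 < c ^ 2 * d := by
    calc ρ * δ ^ 2 < ρ * (c * √(d / ρ)) ^ 2 := by gcongr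
      _ = c ^ 2 * d := by rw [mul_pow, Real.sq_sqrt (by positivity)]; field_simp
  linarith [congrArg (· * d) hc2]

lemma sqrt_two_sub_one_mul_le {d δ : ℝ} (hδ : 0 ≤ δ) (h : d ≤ 2 * δ) : (√2 - 1) * d ≤ δ := by
  nlinarith [Real.sq_sqrt (show (0 : ℝ) ≤ 2 by norm_num), Real.sqrt_nonneg 2]

theorem stmt_13_general (K : Type*) [Field K] [NumberField K] (ι : K →+* ℂ)
    (hdeg : Module.finrank ℚ K = 2) (him : ∃ x : K, (ι x).im ≠ 0)
    (D : ℕ) (ζ : ℂ) (rhat r : ℝ) (hC : MemSD K ι D ζ rhat r)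
    (α : K) (hα : ¬LiesOn (ι α) ζ rhat r) :
    let d : ℝ := Real.sqrt |(NumberField.discr K : ℝ)| *
      ((FractionalIdeal.absNorm (gen2 K α 1) : ℚ) : ℝ) / Real.sqrt D
    ∀ z : ℂ, LiesOn z ζ rhat r →
      (r ≠ 0 → (Real.sqrt 2 - 1) * min d (Real.sqrt (d / |r|)) ≤ ‖z - ι α‖) ∧
      (r = 0 → (Real.sqrt 2 - 1) * d ≤ ‖z - ι α‖) := by
  intro d z hz
  obtain ⟨x, hx⟩ := him
  have hι := ComplexEmbedding.not_isReal_of_im_ne_zero hx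
  obtain ⟨J, hJ⟩ := FractionalIdeal.exists_coeIdeal_mul_eq_one_of_one_mem (right_mem_gen2 α 1)
  obtain ⟨g, hg⟩ := FractionalIdeal.exists_algebraMap_eq_absNorm_mul_of_mem hJ (left_mem_gen2 α 1)
  obtain ⟨n, hn⟩ := FractionalIdeal.exists_abs_norm_mul_absNorm_eq_of_mem hJ (left_mem_gen2 α 1)
  obtain ⟨k, hk⟩ := exists_int_mul_circlePower_eq hdeg hι hC hg hn
  have hd : d = √|(discr K : ℝ)| / (Ideal.absNorm J * √D) := by
    simp only [d, FractionalIdeal.absNorm_eq_inv_of_coeIdeal_mul_eq_one hJ]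
    push_cast
    ring
  have hdf : d ≤ |circlePower ζ rhat r (ι α)| :=
    hd ▸ div_le_abs_of_mul_eq_mul_intCast (by positivity) (by positivity)
      (liesOn_iff_circlePower_eq_zero.not.mp hα) hk
  have hδ : d ≤ |r| * ‖z - ι α‖ ^ 2 + 2 * ‖z - ι α‖ := by
    simpa only [norm_sub_rev] using hdf.trans (hz.abs_circlePower_le hC.1 (ι α))
  refine ⟨fun hr => sqrt_two_sub_one_mul_min_le (abs_pos.mpr hr) (norm_nonneg _) hδ,
    fun hr => sqrt_two_sub_one_mul_le (norm_nonneg _) ?_⟩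
  simpa [hr] using hδ

theorem stmt_13 (K : Type*) [Field K] [NumberField K] (ι : K →+* ℂ)
    (hdeg : Module.finrank ℚ K = 2) (him : ∃ x : K, (ι x).im ≠ 0)
    (hΔ : NumberField.discr K < 0)
    (D : ℕ) (hD : 0 < D) (ζ : ℂ) (rhat r : ℝ) (hC : MemSD K ι D ζ rhat r)
    (α : K) (hα : ¬LiesOn (ι α) ζ rhat r) :
    let d : ℝ := Real.sqrt |(NumberField.discr K : ℝ)| *
      ((FractionalIdeal.absNorm (gen2 K α 1) : ℚ) : ℝ) / Real.sqrt D
    ∀ z : ℂ, LiesOn z ζ rhat r →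
      (r ≠ 0 → (Real.sqrt 2 - 1) * min d (Real.sqrt (d / |r|)) ≤ ‖z - ι α‖) ∧
      (r = 0 → (Real.sqrt 2 - 1) * d ≤ ‖z - ι α‖) :=
  stmt_13_general K ι hdeg him D ζ rhat r hC α hα
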